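/- arXiv:0710.0134 — 5 statements merged into one kernel-verified Lean document; each statement's English description precedes it below -/
import Mathlib

section
/- Let (l_s)_{s ∈ (ω∖{0})^{<ω}} be a family of partial functions from 2^ω to 2^ω such that: (i) dom(l_{s⌢k}) ⊆ dom(l_s) ∩ ⋂_{j<k} dom(l_{s⌢j}), and for all x ∈ dom(l_{s⌢k}) and all i ≤ |s|, l_{s⌢k}(x) ≠ l_{s↾i}(x); (ii) for all x ∈ dom(l_{s⌢k}), d(l_{s⌢k}(x), l_s(x)) < ε(s⌢k, x), where ε(s⌢k,x) := min(2^{-k}, min_{i<|s|} (1/4)·d(l_{s↾i+1}(x), l_{s↾i}(x)), min_{j<k} (1/4)·d(l_{s⌢j}(x), l_s(x))). Then for any s, t ∈ (ω∖{0})^{<ω} and any i < min(|s|,|t|) with s(i) < t(i) and s↾i = t↾i, for every x ∈ dom(l_s) ∩ dom(l_t) one has d(l_s(x), l_t(x)) ≥ (1/3)·d(l_{s↾i+1}(x), l_{s↾i}(x)). -/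
/-!
Along a branch `p n = l_{s↾n}(x)` condition (ii) makes consecutive steps shrink by a factor
`1/4`, so the tail `d(l_s(x), l_{s↾i+1}(x))` is at most `(1/4 + 1/16 + ⋯)` times the step
`d(l_{s↾i+1}(x), l_{s↾i}(x))`, i.e. a third of it. If `s` and `t` split at level `i` with
`s(i) < t(i)`, condition (ii) also makes the step of `t` at level `i` at most a quarter of that
of `s`, and the triangle inequality leaves at least a third of the step of `s` between `l_s(x)`
and `l_t(x)`.
-/

section Distance

variable {α : Type*} (d : α → α → ℝ)

theorem nonneg_of_triangle (hd_self : ∀ x, d x x = 0) (hd_symm : ∀ x y, d x y = d y x)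
    (hd_tri : ∀ x y z, d x z ≤ d x y + d y z) (x y : α) : 0 ≤ d x y := by
  linarith [hd_tri x y x, hd_self x, hd_symm x y]

theorem le_div_one_sub_mul_of_contracting (hd_self : ∀ x, d x x = 0)
    (hd_tri : ∀ x y z, d x z ≤ d x y + d y z) (hd_nonneg : ∀ x y, 0 ≤ d x y)
    {q : ℝ} (hq0 : 0 ≤ q) (hq : q < 1) (p : ℕ → α) (N : ℕ)
    (hp : ∀ n, n + 2 ≤ N → d (p (n + 2)) (p (n + 1)) ≤ q * d (p (n + 1)) (p n))
    {i m : ℕ} (him : i < m) (hmN : m ≤ N) :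
    d (p m) (p (i + 1)) ≤ q / (1 - q) * d (p (i + 1)) (p i) := by
  set c := q / (1 - q)
  -- `c = q + q² + ⋯` is the fixed point of `c ↦ (1 + c) q`; this makes the invariant inductive.
  have hc : (1 + c) * q = c := by
    have : 1 - q ≠ 0 := by linarith
    simp only [c]; field_simp; ring
  have hc_nonneg : 0 ≤ c := div_nonneg hq0 (by linarith)
  have invariant : ∀ n, i ≤ n → n + 1 ≤ N →
      d (p (n + 1)) (p (i + 1)) + c * d (p (n + 1)) (p n) ≤ c * d (p (i + 1)) (p i) := by
    intro n hin
    induction n, hin using Nat.le_induction with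
    | base => intro; simp [hd_self]
    | succ n _ ih =>
      intro hn
      have hstep : (1 + c) * d (p (n + 2)) (p (n + 1)) ≤ c * d (p (n + 1)) (p n) :=
        calc (1 + c) * d (p (n + 2)) (p (n + 1))
            ≤ (1 + c) * (q * d (p (n + 1)) (p n)) := by gcongr; exact hp n hn
          _ = c * d (p (n + 1)) (p n) := by rw [← mul_assoc, hc]
      linarith [ih (by omega), hd_tri (p (n + 2)) (p (n + 1)) (p (i + 1))]
  obtain ⟨n, rfl⟩ : ∃ n, m = n + 1 := ⟨m - 1, by omega⟩
  linarith [invariant n (by omega) hmN, mul_nonneg hc_nonneg (hd_nonneg (p (n + 1)) (p n))]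

theorem third_le_dist_of_branches (hd_symm : ∀ x y, d x y = d y x)
    (hd_tri : ∀ x y z, d x z ≤ d x y + d y z) {a b c u v : α}
    (hu : d u b ≤ 1 / 3 * d b a) (hv : d v c ≤ 1 / 3 * d c a) (hc : d c a ≤ 1 / 4 * d b a) :
    1 / 3 * d b a ≤ d u v := by
  linarith [hd_tri b u a, hd_tri u v a, hd_tri v c a, hd_symm b u]

end Distance

section Tree

variable {α β γ : Type*}

theorem subset_of_isPrefix {D : List β → Set γ} (hD : ∀ s k, D (s ++ [k]) ⊆ D s)
    {s t : List β} (h : s <+: t) : D t ⊆ D s := by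
  obtain ⟨u, rfl⟩ := h
  induction u generalizing s with
  | nil => simp
  | cons k u ih =>
    rw [← List.singleton_append, ← List.append_assoc]
    exact (ih (s := s ++ [k])).trans (hD s k)

theorem dist_take_le_third (l : List β → γ → α) (Dom : List β → Set γ)
    (d : α → α → ℝ)
    (hd_self : ∀ x, d x x = 0) (hd_tri : ∀ x y z, d x z ≤ d x y + d y z)
    (hd_nonneg : ∀ x y, 0 ≤ d x y) (hDom : ∀ s k, Dom (s ++ [k]) ⊆ Dom s)
    (hlt : ∀ (s : List β) (k : β), ∀ x ∈ Dom (s ++ [k]), ∀ i < s.length,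
      d (l (s ++ [k]) x) (l s x) < 1 / 4 * d (l (s.take (i + 1)) x) (l (s.take i) x))
    {s : List β} {x : γ} (hx : x ∈ Dom s) {i : ℕ} (hi : i < s.length) :
    d (l s x) (l (s.take (i + 1)) x) ≤ 1 / 3 * d (l (s.take (i + 1)) x) (l (s.take i) x) := by
  have hcontract : ∀ n, n + 2 ≤ s.length →
      d (l (s.take (n + 2)) x) (l (s.take (n + 1)) x)
        ≤ 1 / 4 * d (l (s.take (n + 1)) x) (l (s.take n) x) := by
    intro n hn
    have hsplit := List.take_succ_eq_append_getElem (l := s) (i := n + 1) (by omega)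
    have hmem : x ∈ Dom (s.take (n + 1) ++ [s[n + 1]]) :=
      hsplit ▸ subset_of_isPrefix hDom (List.take_prefix _ _) hx
    have h := hlt _ _ x hmem n (by simp; omega)
    rw [← hsplit, List.take_take, List.take_take, min_self, min_eq_left (by omega)] at h
    exact h.le
  have h := le_div_one_sub_mul_of_contracting d hd_self hd_tri hd_nonneg
    (by norm_num : (0 : ℝ) ≤ 1 / 4) (by norm_num) (fun n => l (s.take n) x) s.length hcontract
    hi le_rfl
  norm_num [List.take_length] at h ⊢
  exact h

end Tree

theorem separation_estimate_general
    (l : List ℕ+ → (ℕ → Bool) → (ℕ → Bool))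
    (Dom : List ℕ+ → Set (ℕ → Bool))
    (d : (ℕ → Bool) → (ℕ → Bool) → ℝ)
    (hd_self : ∀ x, d x x = 0)
    (hd_symm : ∀ x y, d x y = d y x)
    (hd_tri : ∀ x y z, d x z ≤ d x y + d y z)
    (hdom : ∀ (s : List ℕ+) (k : ℕ+), ∀ x ∈ Dom (s ++ [k]),
      x ∈ Dom s ∧ ∀ j : ℕ+, j < k → x ∈ Dom (s ++ [j]))
    (hlt2 : ∀ (s : List ℕ+) (k : ℕ+), ∀ x ∈ Dom (s ++ [k]), ∀ i < s.length,
      d (l (s ++ [k]) x) (l s x) < (1/4) * d (l (s.take (i+1)) x) (l (s.take i) x))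
    (hlt3 : ∀ (s : List ℕ+) (k : ℕ+), ∀ x ∈ Dom (s ++ [k]), ∀ j : ℕ+, j < k →
      d (l (s ++ [k]) x) (l s x) < (1/4) * d (l (s ++ [j]) x) (l s x)) :
    ∀ (s t : List ℕ+) (i : ℕ) (hi : i < s.length) (hit : i < t.length),
      s.take i = t.take i → s.get ⟨i, hi⟩ < t.get ⟨i, hit⟩ →
      ∀ x, x ∈ Dom s → x ∈ Dom t →
        (1/3) * d (l (s.take (i+1)) x) (l (s.take i) x) ≤ d (l s x) (l t x) := by
  intro s t i hi hit hpre hlt x hxs hxt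
  have hd_nonneg := nonneg_of_triangle d hd_self hd_symm hd_tri
  have hDom : ∀ s k, Dom (s ++ [k]) ⊆ Dom s := fun s k x hx => (hdom s k x hx).1
  have hs := dist_take_le_third l Dom d hd_self hd_tri hd_nonneg hDom hlt2 hxs hi
  have ht := dist_take_le_third l Dom d hd_self hd_tri hd_nonneg hDom hlt2 hxt hit
  have hsplit_s := List.take_succ_eq_append_getElem hi
  have hsplit_t := List.take_succ_eq_append_getElem hit
  have hbranch : d (l (t.take (i + 1)) x) (l (s.take i) x)
      ≤ 1 / 4 * d (l (s.take (i + 1)) x) (l (s.take i) x) := by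
    have hmem : x ∈ Dom (s.take i ++ [t[i]]) :=
      hpre ▸ hsplit_t ▸ subset_of_isPrefix hDom (List.take_prefix _ _) hxt
    have h := hlt3 _ _ x hmem s[i] hlt
    rw [← hsplit_s, hpre, ← hsplit_t, ← hpre] at h
    exact h.le
  rw [← hpre] at ht
  exact third_le_dist_of_branches d hd_symm hd_tri hs ht hbranch

/-- Lemma 12 of the paper: a quantitative separation estimate.  Given a family
`(l_s)_{s ∈ (ω∖{0})^{<ω}}` of partial functions from `2^ω` to `2^ω` (with a fixed
metric `d` on `2^ω`) satisfying the domain-inclusion / distinctness condition (i) and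
the contraction condition (ii) (expressed via the three bounds defining the minimum
`ε(s⌢k,x)`), if `s` and `t` agree up to `i` and `s(i) < t(i)`, then
`d(l_s(x), l_t(x)) ≥ (1/3)·d(l_{s↾i+1}(x), l_{s↾i}(x))` for all `x ∈ dom(l_s) ∩ dom(l_t)`. -/
theorem separation_estimate
    (l : List ℕ+ → (ℕ → Bool) → (ℕ → Bool))
    (Dom : List ℕ+ → Set (ℕ → Bool))
    (d : (ℕ → Bool) → (ℕ → Bool) → ℝ)
    (hd_self : ∀ x, d x x = 0)
    (hd_symm : ∀ x y, d x y = d y x)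
    (hd_tri : ∀ x y z, d x z ≤ d x y + d y z)
    (hd_eq : ∀ x y, d x y = 0 → x = y)
    (hdom : ∀ (s : List ℕ+) (k : ℕ+), ∀ x ∈ Dom (s ++ [k]),
      x ∈ Dom s ∧ ∀ j : ℕ+, j < k → x ∈ Dom (s ++ [j]))
    (hne : ∀ (s : List ℕ+) (k : ℕ+), ∀ x ∈ Dom (s ++ [k]),
      ∀ i ≤ s.length, l (s ++ [k]) x ≠ l (s.take i) x)
    (hlt1 : ∀ (s : List ℕ+) (k : ℕ+), ∀ x ∈ Dom (s ++ [k]),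
      d (l (s ++ [k]) x) (l s x) < (2 : ℝ) ^ (-((k : ℕ) : ℤ)))
    (hlt2 : ∀ (s : List ℕ+) (k : ℕ+), ∀ x ∈ Dom (s ++ [k]), ∀ i < s.length,
      d (l (s ++ [k]) x) (l s x) < (1/4) * d (l (s.take (i+1)) x) (l (s.take i) x))
    (hlt3 : ∀ (s : List ℕ+) (k : ℕ+), ∀ x ∈ Dom (s ++ [k]), ∀ j : ℕ+, j < k →
      d (l (s ++ [k]) x) (l s x) < (1/4) * d (l (s ++ [j]) x) (l s x)) :
    ∀ (s t : List ℕ+) (i : ℕ) (hi : i < s.length) (hit : i < t.length),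
      s.take i = t.take i → s.get ⟨i, hi⟩ < t.get ⟨i, hit⟩ →
      ∀ x, x ∈ Dom s → x ∈ Dom t →
        (1/3) * d (l (s.take (i+1)) x) (l (s.take i) x) ≤ d (l s x) (l t x) :=
  separation_estimate_general l Dom d hd_self hd_symm hd_tri hdom hlt2 hlt3
end

section
/- Under the hypotheses of the previous separation lemma (conditions (d) and (e) of Lemma 11 on the family (l_s)), for any x in the intersection of all domains dom(l_w), the values l_s(x) for distinct s ∈ (ω∖{0})^{<ω} with x ∈ dom(l_s) ∩ dom(l_t) satisfy: if s ≠ t then l_s(x) ≠ l_t(x). -/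
/-!
Along a branch `s₀ ⊂ s₁ ⊂ ⋯` of the tree, each step `d(l_{sᵢ₊₁}(x), l_{sᵢ}(x))` is less than a
quarter of the previous one, so the whole tail beyond `w⌢a` stays within a third of
`d(l_{w⌢a}(x), l_w(x))` of `l_{w⌢a}(x)`. If `s` and `t` first differ at `w⌢a` versus `w⌢b` with
`a < b`, then `d(l_{w⌢b}(x), l_w(x))` is less than a quarter of `d(l_{w⌢a}(x), l_w(x))`, and the two
balls of radius a third around `l_{w⌢a}(x)` and `l_{w⌢b}(x)` are disjoint. If instead `s` is a
proper prefix of `t`, condition (i) says directly that `l_t(x) ≠ l_s(x)`.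
-/

open Function

theorem List.prefix_or_prefix_or_exists_append_cons {ι : Type*} (s t : List ι) :
    s <+: t ∨ t <+: s ∨ ∃ w a b u v, a ≠ b ∧ s = w ++ a :: u ∧ t = w ++ b :: v := by
  induction s generalizing t with
  | nil => exact Or.inl List.nil_prefix
  | cons a s ih =>
    cases t with
    | nil => exact Or.inr (Or.inl List.nil_prefix)
    | cons b t =>
      by_cases hab : a = b
      · subst hab
        rcases ih t with h | h | ⟨w, a', b', u, v, hne, rfl, rfl⟩
        · exact Or.inl (List.cons_prefix_cons.mpr ⟨rfl, h⟩)
        · exact Or.inr (Or.inl (List.cons_prefix_cons.mpr ⟨rfl, h⟩))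
        · exact Or.inr (Or.inr ⟨a :: w, a', b', u, v, hne, rfl, rfl⟩)
      · exact Or.inr (Or.inr ⟨[], a, b, s, t, hab, rfl, rfl⟩)

theorem apply_ne_of_prefix {α ι : Type*} (L : List ι → α)
    (hne : ∀ s k, ∀ i ≤ s.length, L (s ++ [k]) ≠ L (s.take i))
    {s t : List ι} (hst : s <+: t) (hst_ne : s ≠ t) : L t ≠ L s := by
  obtain ⟨u, rfl⟩ := hst
  obtain rfl | ⟨u, k, rfl⟩ := u.eq_nil_or_concat'
  · simp at hst_ne
  have h := hne (s ++ u) k s.length (by simp)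
  rwa [List.take_left, List.append_assoc] at h

section PseudoMetricSpace

variable {α : Type*} [PseudoMetricSpace α]

theorem dist_le_third_of_quarter_contraction (f : ℕ → α) {m n : ℕ} (hmn : m < n)
    (hf : ∀ k, m ≤ k → k + 2 ≤ n →
      dist (f (k + 2)) (f (k + 1)) ≤ 1 / 4 * dist (f (k + 1)) (f k)) :
    dist (f n) (f (m + 1)) ≤ 1 / 3 * dist (f (m + 1)) (f m) := by
  -- The last step, weighted by `1/3 = 1/4 + 1/4² + ⋯`, bounds everything still to come.
  suffices h : ∀ k, m ≤ k → k < n →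
      dist (f (k + 1)) (f (m + 1)) + 1 / 3 * dist (f (k + 1)) (f k)
        ≤ 1 / 3 * dist (f (m + 1)) (f m) by
    obtain ⟨k, rfl⟩ : ∃ k, n = k + 1 := ⟨n - 1, by omega⟩
    linarith [h k (by omega) (by omega), dist_nonneg (x := f (k + 1)) (y := f k)]
  intro k hmk hkn
  induction k, hmk using Nat.le_induction with
  | base => simp
  | succ k hmk ih =>
    linarith [ih (by omega), hf k hmk (by omega),
      dist_triangle (f (k + 2)) (f (k + 1)) (f (m + 1))]

variable {ι : Type*} (L : List ι → α)

theorem dist_take_add_two_le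
    (hcontract : ∀ s a b, dist (L (s ++ [a] ++ [b])) (L (s ++ [a])) ≤ 1 / 4 * dist (L (s ++ [a])) (L s))
    (c : List ι) {k : ℕ} (hk : k + 2 ≤ c.length) :
    dist (L (c.take (k + 2))) (L (c.take (k + 1)))
      ≤ 1 / 4 * dist (L (c.take (k + 1))) (L (c.take k)) := by
  rw [← List.take_concat_get' c (k + 1) (by omega), ← List.take_concat_get' c k (by omega)]
  exact hcontract _ _ _

theorem dist_append_cons_le
    (hcontract : ∀ s a b, dist (L (s ++ [a] ++ [b])) (L (s ++ [a])) ≤ 1 / 4 * dist (L (s ++ [a])) (L s))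
    (w : List ι) (a : ι) (u : List ι) :
    dist (L (w ++ a :: u)) (L (w ++ [a])) ≤ 1 / 3 * dist (L (w ++ [a])) (L w) := by
  have h := dist_le_third_of_quarter_contraction (fun k => L ((w ++ a :: u).take k))
    (m := w.length) (n := (w ++ a :: u).length) (by simp)
    (fun k _ hk => dist_take_add_two_le L hcontract _ hk)
  have hwa : (w ++ a :: u).take (w.length + 1) = w ++ [a] := by
    rw [← List.singleton_append, ← List.append_assoc, List.take_left' (by simp)]
  rwa [List.take_length, hwa, List.take_left] at h

theorem apply_append_cons_ne_of_lt [LT ι]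
    (hcontract : ∀ s a b, dist (L (s ++ [a] ++ [b])) (L (s ++ [a])) ≤ 1 / 4 * dist (L (s ++ [a])) (L s))
    (hsep : ∀ s j k, j < k → dist (L (s ++ [k])) (L s) < 1 / 4 * dist (L (s ++ [j])) (L s))
    (w : List ι) {a b : ι} (hab : a < b) (u v : List ι) :
    L (w ++ a :: u) ≠ L (w ++ b :: v) := by
  intro heq
  have ha := dist_append_cons_le L hcontract w a u
  have hb := dist_append_cons_le L hcontract w b v
  rw [← heq] at hb
  linarith [hsep w a b hab, dist_triangle (L (w ++ [a])) (L (w ++ [b])) (L w),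
    dist_triangle_left (L (w ++ [a])) (L (w ++ [b])) (L (w ++ a :: u)),
    dist_nonneg (x := L (w ++ [a])) (y := L w)]

theorem injective_of_quarter_contraction [LinearOrder ι]
    (hne : ∀ s k, ∀ i ≤ s.length, L (s ++ [k]) ≠ L (s.take i))
    (hcontract : ∀ s a b, dist (L (s ++ [a] ++ [b])) (L (s ++ [a])) ≤ 1 / 4 * dist (L (s ++ [a])) (L s))
    (hsep : ∀ s j k, j < k → dist (L (s ++ [k])) (L s) < 1 / 4 * dist (L (s ++ [j])) (L s)) :
    Injective L := by
  intro s t heq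
  by_contra hst
  rcases s.prefix_or_prefix_or_exists_append_cons t with h | h | ⟨w, a, b, u, v, hab, rfl, rfl⟩
  · exact apply_ne_of_prefix L hne h hst heq.symm
  · exact apply_ne_of_prefix L hne h (Ne.symm hst) heq
  · rcases hab.lt_or_gt with h | h
    · exact apply_append_cons_ne_of_lt L hcontract hsep w h u v heq
    · exact apply_append_cons_ne_of_lt L hcontract hsep w h v u heq.symm

end PseudoMetricSpace

theorem values_pairwise_distinct_general
    (l : List ℕ+ → (ℕ → Bool) → (ℕ → Bool))
    (Dom : List ℕ+ → Set (ℕ → Bool))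
    (d : (ℕ → Bool) → (ℕ → Bool) → ℝ)
    (hd_self : ∀ x, d x x = 0)
    (hd_symm : ∀ x y, d x y = d y x)
    (hd_tri : ∀ x y z, d x z ≤ d x y + d y z)
    (hne : ∀ (s : List ℕ+) (k : ℕ+), ∀ x ∈ Dom (s ++ [k]),
      ∀ i ≤ s.length, l (s ++ [k]) x ≠ l (s.take i) x)
    (hlt2 : ∀ (s : List ℕ+) (k : ℕ+), ∀ x ∈ Dom (s ++ [k]), ∀ i < s.length,
      d (l (s ++ [k]) x) (l s x) < (1/4) * d (l (s.take (i+1)) x) (l (s.take i) x))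
    (hlt3 : ∀ (s : List ℕ+) (k : ℕ+), ∀ x ∈ Dom (s ++ [k]), ∀ j : ℕ+, j < k →
      d (l (s ++ [k]) x) (l s x) < (1/4) * d (l (s ++ [j]) x) (l s x)) :
    ∀ x, (∀ w : List ℕ+, x ∈ Dom w) →
      ∀ s t : List ℕ+, s ≠ t → l s x ≠ l t x := by
  intro x hx
  let _ : PseudoMetricSpace (ℕ → Bool) :=
    { dist := d, dist_self := hd_self, dist_comm := hd_symm, dist_triangle := hd_tri }
  refine fun s t => (injective_of_quarter_contraction (fun s => l s x)
    (fun s k => hne s k x (hx _)) (fun s a b => ?_) (fun s j k hjk => hlt3 s k x (hx _) j hjk)).ne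
  have h := hlt2 (s ++ [a]) b x (hx _) s.length (by simp)
  rw [List.take_left, ← List.length_concat, List.concat_eq_append, List.take_length] at h
  exact h.le

/-- Under the hypotheses of the separation lemma (conditions (d) and (e) of Lemma 11),
for any `x` lying in all the domains `dom(l_w)`, the values `l_s(x)` are pairwise
distinct: `s ≠ t` implies `l_s(x) ≠ l_t(x)`. -/
theorem values_pairwise_distinct
    (l : List ℕ+ → (ℕ → Bool) → (ℕ → Bool))
    (Dom : List ℕ+ → Set (ℕ → Bool))
    (d : (ℕ → Bool) → (ℕ → Bool) → ℝ)
    (hd_self : ∀ x, d x x = 0)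
    (hd_symm : ∀ x y, d x y = d y x)
    (hd_tri : ∀ x y z, d x z ≤ d x y + d y z)
    (hd_eq : ∀ x y, d x y = 0 → x = y)
    (hdom : ∀ (s : List ℕ+) (k : ℕ+), ∀ x ∈ Dom (s ++ [k]),
      x ∈ Dom s ∧ ∀ j : ℕ+, j < k → x ∈ Dom (s ++ [j]))
    (hne : ∀ (s : List ℕ+) (k : ℕ+), ∀ x ∈ Dom (s ++ [k]),
      ∀ i ≤ s.length, l (s ++ [k]) x ≠ l (s.take i) x)
    (hlt1 : ∀ (s : List ℕ+) (k : ℕ+), ∀ x ∈ Dom (s ++ [k]),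
      d (l (s ++ [k]) x) (l s x) < (2 : ℝ) ^ (-((k : ℕ) : ℤ)))
    (hlt2 : ∀ (s : List ℕ+) (k : ℕ+), ∀ x ∈ Dom (s ++ [k]), ∀ i < s.length,
      d (l (s ++ [k]) x) (l s x) < (1/4) * d (l (s.take (i+1)) x) (l (s.take i) x))
    (hlt3 : ∀ (s : List ℕ+) (k : ℕ+), ∀ x ∈ Dom (s ++ [k]), ∀ j : ℕ+, j < k →
      d (l (s ++ [k]) x) (l s x) < (1/4) * d (l (s ++ [j]) x) (l s x)) :
    ∀ x, (∀ w : List ℕ+, x ∈ Dom w) →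
      ∀ s t : List ℕ+, s ≠ t → l s x ≠ l t x :=
  values_pairwise_distinct_general l Dom d hd_self hd_symm hd_tri hne hlt2 hlt3
end

section
/- With h_s as defined via the prime coding J, for every x ∈ 2^ω and every s ∈ (ω∖{0})^{<ω}, the sequence h_{s⌢k}(x) converges to h_s(x) in 2^ω as k → ∞. More precisely, the smallest coordinate n where h_{s⌢k}(x)(n) ≠ h_s(x)(n), if it exists, satisfies n ≥ J(s⌢k)/q_{|s|} − 1, which tends to infinity with k. -/
/-- The prime coding `J(s) = ∏_{j<|s|} q_j^(s(j)+1)` (with `J(∅) = 0`). -/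
noncomputable def Jcode (s : List ℕ) : ℕ :=
  if s = [] then 0
  else ∏ j ∈ Finset.range s.length, (Nat.nth Nat.Prime j) ^ (s.getD j 0 + 1)

/-- The function `h_s : 2^ω → 2^ω` of the example: `h_s(x)(k)` is
`x(J(s↾i)·q − J(s↾i)/q_{i−1} − 1)` when `k = (J(s↾i)/q_{i−1})·q − 1` with
`1 ≤ i ≤ |s|` maximal such that `k ≡ −1 (mod J(s↾i)/q_{i−1})`, and `x(k)` otherwise. -/
noncomputable def hmap (s : List ℕ) (x : ℕ → Bool) : ℕ → Bool := fun k =>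
  let I := (Finset.Icc 1 s.length).filter
    (fun j => (Jcode (s.take j) / Nat.nth Nat.Prime (j - 1)) ∣ (k + 1))
  if hI : I.Nonempty then
    let i := I.max' hI
    let q := (k + 1) / (Jcode (s.take i) / Nat.nth Nat.Prime (i - 1))
    x (Jcode (s.take i) * q - Jcode (s.take i) / Nat.nth Nat.Prime (i - 1) - 1)
  else x k

/-!
Appending `k` to `s` adds only one new candidate index `i = |s| + 1` to the definition of
`h_{s⌢k}(x)(n)`, with modulus `J(s⌢k)/q_{|s|} = J(s)·q_{|s|}^k` (read `J(∅)` as `1`); the other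
candidates see the same prefixes `s↾i`. So `h_{s⌢k}(x)(n) = h_s(x)(n)` unless that modulus divides
`n + 1`, and the modulus exceeds `k`.
-/

open Filter Finset

lemma Jcode_append_singleton (s : List ℕ) (k : ℕ) :
    Jcode (s ++ [k]) = (∏ j ∈ range s.length, Nat.nth Nat.Prime j ^ (s.getD j 0 + 1)) *
      Nat.nth Nat.Prime s.length ^ (k + 1) := by
  rw [Jcode, if_neg (by simp), List.length_append, List.length_singleton, prod_range_succ,
    List.getD_append_right _ _ _ _ le_rfl, Nat.sub_self]
  congr 1
  exact prod_congr rfl fun j hj => by rw [List.getD_append _ _ _ _ (mem_range.mp hj)]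

lemma lt_Jcode_append_singleton_div (s : List ℕ) (k : ℕ) :
    k < Jcode (s ++ [k]) / Nat.nth Nat.Prime s.length := by
  have hq := Nat.prime_nth_prime s.length
  have hP : 0 < ∏ j ∈ range s.length, Nat.nth Nat.Prime j ^ (s.getD j 0 + 1) :=
    prod_pos fun j _ => pow_pos (Nat.prime_nth_prime j).pos _
  rw [Jcode_append_singleton, pow_succ, ← mul_assoc, Nat.mul_div_cancel _ hq.pos]
  calc k < 2 ^ k := Nat.lt_two_pow_self
    _ ≤ Nat.nth Nat.Prime s.length ^ k := Nat.pow_le_pow_left hq.two_le k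
    _ ≤ _ := Nat.le_mul_of_pos_left _ hP

lemma filter_Icc_length_append_singleton (s : List ℕ) (k n : ℕ)
    (h : ¬ Jcode (s ++ [k]) / Nat.nth Nat.Prime s.length ∣ n + 1) :
    (Icc 1 (s ++ [k]).length).filter
        (fun j => Jcode ((s ++ [k]).take j) / Nat.nth Nat.Prime (j - 1) ∣ n + 1) =
      (Icc 1 s.length).filter
        (fun j => Jcode (s.take j) / Nat.nth Nat.Prime (j - 1) ∣ n + 1) := by
  ext j
  simp only [mem_filter, mem_Icc, List.length_append, List.length_singleton]
  constructor
  · rintro ⟨⟨hj1, hj2⟩, hd⟩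
    obtain hj | rfl := Nat.lt_or_eq_of_le hj2
    · rw [List.take_append_of_le_length (Nat.lt_succ_iff.mp hj)] at hd
      exact ⟨⟨hj1, Nat.lt_succ_iff.mp hj⟩, hd⟩
    · rw [List.take_of_length_le (by simp), Nat.add_sub_cancel] at hd
      exact absurd hd h
  · rintro ⟨⟨hj1, hj2⟩, hd⟩
    exact ⟨⟨hj1, hj2.trans (Nat.le_succ _)⟩, by rwa [List.take_append_of_le_length hj2]⟩

lemma hmap_append_singleton_apply_of_not_dvd (s : List ℕ) (k : ℕ) (x : ℕ → Bool) (n : ℕ)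
    (h : ¬ Jcode (s ++ [k]) / Nat.nth Nat.Prime s.length ∣ n + 1) :
    hmap (s ++ [k]) x n = hmap s x n := by
  simp only [hmap]
  rw [filter_Icc_length_append_singleton s k n h]
  split_ifs with hne
  · have hi := (mem_filter.mp (max'_mem _ hne)).1
    rw [List.take_append_of_le_length (mem_Icc.mp hi).2]
  · rfl

lemma hmap_append_singleton_apply_of_lt (s : List ℕ) (k : ℕ) (x : ℕ → Bool) (n : ℕ)
    (h : n + 1 < Jcode (s ++ [k]) / Nat.nth Nat.Prime s.length) :
    hmap (s ++ [k]) x n = hmap s x n :=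
  hmap_append_singleton_apply_of_not_dvd s k x n fun hd =>
    (Nat.le_of_dvd n.succ_pos hd).not_gt h

theorem hmap_extension_tendsto_general (s : List ℕ) (x : ℕ → Bool) :
    Tendsto (fun k : ℕ => hmap (s ++ [k]) x) atTop (nhds (hmap s x)) ∧
    (∀ k : ℕ, 0 < k → ∀ n : ℕ,
      hmap (s ++ [k]) x n ≠ hmap s x n → (∀ m < n, hmap (s ++ [k]) x m = hmap s x m) →
      Jcode (s ++ [k]) / Nat.nth Nat.Prime s.length - 1 ≤ n) ∧
    Tendsto (fun k : ℕ => Jcode (s ++ [k]) / Nat.nth Nat.Prime s.length - 1)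
      atTop atTop := by
  have hk := lt_Jcode_append_singleton_div s
  refine ⟨?_, ?_, ?_⟩
  · refine tendsto_pi_nhds.mpr fun n => tendsto_const_nhds.congr' ?_
    filter_upwards [eventually_gt_atTop (n + 1)] with k hnk
    exact (hmap_append_singleton_apply_of_lt s k x n (hnk.trans (hk k))).symm
  · intro k _ n hne _
    by_contra hlt
    exact hne (hmap_append_singleton_apply_of_lt s k x n (by omega))
  · exact tendsto_atTop_mono (fun k => Nat.le_sub_one_of_lt (hk k)) tendsto_id

open Filter in
/-- `h_{s⌢k}(x)` converges to `h_s(x)` as `k → ∞`; more precisely, the first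
coordinate where they differ (if any) is at least `J(s⌢k)/q_{|s|} − 1`, which tends
to infinity with `k`. -/
theorem hmap_extension_tendsto (s : List ℕ) (hs : ∀ a ∈ s, 0 < a) (x : ℕ → Bool) :
    Tendsto (fun k : ℕ => hmap (s ++ [k]) x) atTop (nhds (hmap s x)) ∧
    (∀ k : ℕ, 0 < k → ∀ n : ℕ,
      hmap (s ++ [k]) x n ≠ hmap s x n → (∀ m < n, hmap (s ++ [k]) x m = hmap s x m) →
      Jcode (s ++ [k]) / Nat.nth Nat.Prime s.length - 1 ≤ n) ∧
    Tendsto (fun k : ℕ => Jcode (s ++ [k]) / Nat.nth Nat.Prime s.length - 1)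
      atTop atTop :=
  hmap_extension_tendsto_general s x
end

section
/- With h_s as defined via the prime coding J, for any distinct s, t ∈ (ω∖{0})^{<ω}, the set {x ∈ 2^ω : h_s(x) ≠ h_t(x)} is dense in 2^ω. -/
/-!
`hmap s` reads at `k` a coordinate `hmapIndex s k ≥ k`, so it suffices to find arbitrarily large
`k` at which `h_s` and `h_t` read different coordinates. Let `m` be the first position where
`s` and `t` differ, say `s_m < t_m` (reading `s_m = 0` past the end of `s`), and take
`k + 1 = J(t↾m) · q_m ^ E` with `E` large. Since all entries are positive, `q_{m+1}` divides every
divisor `J(t↾j) / q_{j-1}` with `j > m + 1`, but not `k + 1`; so the maximal admissible `i` is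
`m + 1`, and `h_t` reads `q_m (k + 1) - J(t↾(m+1))/q_m - 1`. If `m < |s|` the same holds for `s`,
with a different divisor `J(s↾(m+1))/q_m`; if `|s| ≤ m`, `h_s` reads below `(q_{|s|} - 1)(k + 1)`,
hence below what `h_t` reads.
-/

local notation "q" => Nat.nth Nat.Prime

theorem List.ext_getD_of_not_mem {α : Type*} {s t : List α} {d : α} (hs : d ∉ s) (ht : d ∉ t)
    (h : ∀ n, s.getD n d = t.getD n d) : s = t := by
  have length_le : ∀ {s t : List α}, d ∉ s → (∀ n, s.getD n d = t.getD n d) →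
      s.length ≤ t.length := by
    intro s t hs h
    by_contra! hlt
    have := h t.length
    rw [List.getD_eq_getElem _ _ hlt, List.getD_eq_default _ _ le_rfl] at this
    exact hs (this ▸ List.getElem_mem hlt)
  refine List.ext_getElem (le_antisymm (length_le hs h) (length_le ht fun n => (h n).symm))
    fun n hs ht => ?_
  simpa only [List.getD_eq_getElem _ _ hs, List.getD_eq_getElem _ _ ht] using h n

theorem dense_setOf_comp_ne {α : Type*} [TopologicalSpace α] [Nontrivial α] {f g : ℕ → ℕ}
    (hf : ∀ k, k ≤ f k) (hg : ∀ k, k ≤ g k) (h : ∀ N, ∃ k, N < k ∧ f k ≠ g k) :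
    Dense {x : ℕ → α | x ∘ f ≠ x ∘ g} := by
  choose k hk hfg using h
  obtain ⟨u, v, huv⟩ := exists_pair_ne α
  intro y
  let z : ℕ → ℕ → α := fun N => Function.update (Function.update y (f (k N)) u) (g (k N)) v
  have hz : ∀ N, z N ∈ {x : ℕ → α | x ∘ f ≠ x ∘ g} := fun N hN => by
    have := congrFun hN (k N)
    simp only [Function.comp_apply, z, Function.update_self,
      Function.update_of_ne (hfg N)] at this
    exact huv this
  refine mem_closure_of_tendsto (b := Filter.atTop) (tendsto_pi_nhds.2 fun i => ?_)
    (Filter.Eventually.of_forall hz)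
  refine tendsto_const_nhds.congr' (Filter.eventually_atTop.2 ⟨i, fun N hN => ?_⟩)
  have hfi : i ≠ f (k N) := by have := hk N; have := hf (k N); omega
  have hgi : i ≠ g (k N) := by have := hk N; have := hg (k N); omega
  simp only [z, Function.update_of_ne hfi, Function.update_of_ne hgi]

theorem nth_prime_two_le (i : ℕ) : 2 ≤ q i := (Nat.prime_nth_prime i).two_le

theorem nth_prime_strictMono : StrictMono q := Nat.nth_strictMono Nat.infinite_setOfPred_prime

theorem eq_of_nth_prime_dvd_pow {i j a : ℕ} (h : q i ∣ q j ^ a) : i = j :=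
  nth_prime_strictMono.injective <| (Nat.prime_dvd_prime_iff_eq (Nat.prime_nth_prime i)
    (Nat.prime_nth_prime j)).1 ((Nat.prime_nth_prime i).dvd_of_dvd_pow h)

/-- `Jprod s n` is `J(s↾n)` for `0 < n ≤ |s|`. -/
noncomputable def Jprod (s : List ℕ) (n : ℕ) : ℕ :=
  ∏ l ∈ Finset.range n, q l ^ (s.getD l 0 + 1)

/-- `Jdiv s i` is `J(s↾(i+1)) / q_i` for `i < |s|`. -/
noncomputable def Jdiv (s : List ℕ) (i : ℕ) : ℕ := Jprod s i * q i ^ s.getD i 0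

theorem Jprod_pos (s : List ℕ) (n : ℕ) : 0 < Jprod s n :=
  Finset.prod_pos fun l _ => pow_pos (Nat.prime_nth_prime l).pos _

theorem Jprod_succ (s : List ℕ) (i : ℕ) : Jprod s (i + 1) = q i * Jdiv s i := by
  rw [Jprod, Finset.prod_range_succ, ← Jprod, Jdiv, pow_succ]
  ring

theorem Jprod_congr {s t : List ℕ} {n : ℕ} (h : ∀ l < n, s.getD l 0 = t.getD l 0) :
    Jprod s n = Jprod t n :=
  Finset.prod_congr rfl fun l hl => by rw [h l (Finset.mem_range.1 hl)]

theorem Jcode_take {s : List ℕ} {n : ℕ} (hn : 0 < n) (hns : n ≤ s.length) :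
    Jcode (s.take n) = Jprod s n := by
  have hne : s.take n ≠ [] := by
    simp only [ne_eq, List.take_eq_nil_iff, not_or]
    exact ⟨hn.ne', List.ne_nil_of_length_pos (hn.trans_le hns)⟩
  rw [Jcode, if_neg hne, List.length_take_of_le hns, Jprod]
  refine Finset.prod_congr rfl fun l hl => ?_
  rw [List.getD_eq_getElem?_getD, List.getD_eq_getElem?_getD,
    List.getElem?_take_of_lt (Finset.mem_range.1 hl)]

theorem Jcode_take_succ_div {s : List ℕ} {i : ℕ} (hi : i < s.length) :
    Jcode (s.take (i + 1)) / q i = Jdiv s i := by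
  rw [Jcode_take i.succ_pos hi, Jprod_succ, Nat.mul_div_cancel_left _ (Nat.prime_nth_prime i).pos]

theorem not_nth_prime_dvd_Jprod (s : List ℕ) {n j : ℕ} (h : n ≤ j) : ¬ q j ∣ Jprod s n := by
  rw [Jprod, (Nat.prime_nth_prime j).prime.dvd_finsetProd_iff]
  rintro ⟨l, hl, hdvd⟩
  have := eq_of_nth_prime_dvd_pow hdvd
  have := Finset.mem_range.1 hl
  omega

theorem nth_prime_dvd_Jdiv {s : List ℕ} (hs : 0 ∉ s) {i j : ℕ} (hij : i ≤ j) (hj : j < s.length) :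
    q i ∣ Jdiv s j := by
  rcases hij.lt_or_eq with hij | rfl
  · refine Dvd.dvd.mul_right ?_ _
    exact (dvd_pow_self _ (s.getD i 0).succ_ne_zero).trans
      (Finset.dvd_prod_of_mem _ (Finset.mem_range.2 hij))
  · have hsi : s.getD i 0 ≠ 0 := by
      rw [List.getD_eq_getElem _ _ hj]
      exact fun h => hs (h ▸ List.getElem_mem hj)
    exact (dvd_pow_self _ hsi).mul_left _

noncomputable def hmapIndex (s : List ℕ) (k : ℕ) : ℕ :=
  let I := (Finset.Icc 1 s.length).filter
    (fun j => (Jcode (s.take j) / q (j - 1)) ∣ (k + 1))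
  if hI : I.Nonempty then
    let i := I.max' hI
    let r := (k + 1) / (Jcode (s.take i) / q (i - 1))
    Jcode (s.take i) * r - Jcode (s.take i) / q (i - 1) - 1
  else k

theorem hmap_eq_comp (s : List ℕ) (x : ℕ → Bool) : hmap s x = x ∘ hmapIndex s := by
  funext k
  simp only [hmap, hmapIndex, Function.comp_apply]
  split <;> rfl

theorem hmapIndex_spec (s : List ℕ) (k : ℕ) :
    (∀ i < s.length, ¬ Jdiv s i ∣ k + 1) ∧ hmapIndex s k = k ∨
    ∃ i < s.length, Jdiv s i ∣ k + 1 ∧ (∀ j, i < j → j < s.length → ¬ Jdiv s j ∣ k + 1) ∧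
      hmapIndex s k = q i * (k + 1) - Jdiv s i - 1 := by
  set I := (Finset.Icc 1 s.length).filter
    (fun j => (Jcode (s.take j) / q (j - 1)) ∣ (k + 1)) with hI
  have mem_I : ∀ j, j + 1 ∈ I ↔ j < s.length ∧ Jdiv s j ∣ k + 1 := fun j => by
    simp only [hI, Finset.mem_filter, Finset.mem_Icc, Nat.add_sub_cancel]
    constructor
    · rintro ⟨⟨-, hj⟩, hd⟩
      exact ⟨hj, Jcode_take_succ_div hj ▸ hd⟩
    · rintro ⟨hj, hd⟩
      exact ⟨⟨j.succ_pos, hj⟩, (Jcode_take_succ_div hj).symm ▸ hd⟩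
  have succ_of_mem : ∀ j ∈ I, ∃ i, j = i + 1 := fun j hj =>
    ⟨j - 1, by have := (Finset.mem_Icc.1 (Finset.mem_filter.1 hj).1).1; omega⟩
  unfold hmapIndex
  dsimp only
  rw [← hI]
  split_ifs with hne
  · right
    obtain ⟨i, hi⟩ := succ_of_mem _ (I.max'_mem hne)
    obtain ⟨hilen, hd⟩ := (mem_I i).1 (hi ▸ I.max'_mem hne)
    refine ⟨i, hilen, hd, fun j hij hj hdj => ?_, ?_⟩
    · have := I.le_max' _ ((mem_I j).2 ⟨hj, hdj⟩)
      omega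
    · simp only [hi, Nat.add_sub_cancel, Jcode_take_succ_div hilen]
      rw [Jcode_take i.succ_pos hilen, Jprod_succ, mul_assoc, Nat.mul_div_cancel' hd]
  · left
    exact ⟨fun i hi hd => hne ⟨i + 1, (mem_I i).2 ⟨hi, hd⟩⟩, rfl⟩

theorem le_hmapIndex (s : List ℕ) (k : ℕ) : k ≤ hmapIndex s k := by
  rcases hmapIndex_spec s k with ⟨-, hk⟩ | ⟨i, -, hd, -, hk⟩
  · exact hk.ge
  · have hle := Nat.le_of_dvd k.succ_pos hd
    have h2 : 2 * (k + 1) ≤ q i * (k + 1) := Nat.mul_le_mul_right _ (nth_prime_two_le i)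
    omega

theorem hmapIndex_lt (s : List ℕ) (k : ℕ) : hmapIndex s k < (q s.length - 1) * (k + 1) := by
  have h2 := nth_prime_two_le s.length
  rw [Nat.sub_one_mul]
  rcases hmapIndex_spec s k with ⟨-, hk⟩ | ⟨i, hi, -, -, hk⟩
  · have : 2 * (k + 1) ≤ q s.length * (k + 1) := Nat.mul_le_mul_right _ h2
    omega
  · have : q i * (k + 1) + (k + 1) ≤ q s.length * (k + 1) := by
      rw [← Nat.succ_mul]
      exact Nat.mul_le_mul_right _ (nth_prime_strictMono hi)
    have : 2 * (k + 1) ≤ q i * (k + 1) := Nat.mul_le_mul_right _ (nth_prime_two_le i)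
    omega

theorem hmapIndex_eq_of_dvd {s : List ℕ} (hs : 0 ∉ s) {i k : ℕ} (hi : i < s.length)
    (hd : Jdiv s i ∣ k + 1) (hnd : ¬ q (i + 1) ∣ k + 1) :
    hmapIndex s k = q i * (k + 1) - Jdiv s i - 1 := by
  rcases hmapIndex_spec s k with ⟨hnone, -⟩ | ⟨i', hi', hd', hmax, hk⟩
  · exact absurd hd (hnone i hi)
  · obtain rfl : i' = i := by
      rcases lt_trichotomy i' i with h | h | h
      · exact absurd hd (hmax i h hi)
      · exact h
      · exact absurd ((nth_prime_dvd_Jdiv hs h hi').trans hd') hnd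
    exact hk

theorem exists_hmapIndex_ne {s t : List ℕ} (hs : 0 ∉ s) (ht : 0 ∉ t) {m : ℕ}
    (hagree : ∀ l < m, s.getD l 0 = t.getD l 0) (hlt : s.getD m 0 < t.getD m 0) (N : ℕ) :
    ∃ k, N < k ∧ hmapIndex s k ≠ hmapIndex t k := by
  have hmt : m < t.length := by
    by_contra! h
    rw [List.getD_eq_default _ _ h] at hlt
    exact Nat.not_lt_zero _ hlt
  set n := Jprod t m * q m ^ (t.getD m 0 + N + 2)
  have hn_large : N + 2 < n :=
    calc N + 2 ≤ t.getD m 0 + N + 2 := by omega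
      _ < 2 ^ (t.getD m 0 + N + 2) := Nat.lt_two_pow_self
      _ ≤ q m ^ (t.getD m 0 + N + 2) := Nat.pow_le_pow_left (nth_prime_two_le m) _
      _ ≤ n := Nat.le_mul_of_pos_left _ (Jprod_pos t m)
  have hn1 : n - 1 + 1 = n := by omega
  have hnd : ¬ q (m + 1) ∣ n - 1 + 1 := by
    rw [hn1]
    intro h
    rcases (Nat.prime_nth_prime _).dvd_mul.1 h with h | h
    · exact not_nth_prime_dvd_Jprod t m.le_succ h
    · exact m.succ_ne_self (eq_of_nth_prime_dvd_pow h)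
  have hdvd : ∀ {a}, a ≤ t.getD m 0 + N + 2 → Jprod t m * q m ^ a ∣ n - 1 + 1 := fun ha => by
    rw [hn1]
    exact Nat.mul_dvd_mul_left _ (pow_dvd_pow _ ha)
  have hlt_pow : ∀ {a b}, a < b → Jprod t m * q m ^ a < Jprod t m * q m ^ b := fun hab =>
    Nat.mul_lt_mul_of_pos_left (Nat.pow_lt_pow_right (nth_prime_two_le m) hab) (Jprod_pos t m)
  have ht_lt : Jdiv t m < n := hlt_pow (by omega)
  have ht_idx : hmapIndex t (n - 1) = q m * n - Jdiv t m - 1 := by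
    rw [hmapIndex_eq_of_dvd ht hmt (hdvd (by omega)) hnd, hn1]
  have h2n : 2 * n ≤ q m * n := Nat.mul_le_mul_right _ (nth_prime_two_le m)
  refine ⟨n - 1, by omega, ?_⟩
  rcases lt_or_ge m s.length with hms | hms
  · have hJ : Jdiv s m = Jprod t m * q m ^ s.getD m 0 := by rw [Jdiv, Jprod_congr hagree]
    have hs_lt : Jdiv s m < Jdiv t m := hJ ▸ hlt_pow hlt
    have hs_idx : hmapIndex s (n - 1) = q m * n - Jdiv s m - 1 := by
      rw [hmapIndex_eq_of_dvd hs hms (hJ ▸ hdvd (by omega)) hnd, hn1]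
    omega
  · have hs_lt := hmapIndex_lt s (n - 1)
    rw [hn1, Nat.sub_one_mul] at hs_lt
    have : q s.length * n ≤ q m * n := Nat.mul_le_mul_right _ (nth_prime_strictMono.monotone hms)
    omega

/-- For distinct finite sequences `s ≠ t` of positive integers, the set of `x ∈ 2^ω`
where `h_s(x) ≠ h_t(x)` is dense in `2^ω`. -/
theorem hmap_distinct_dense (s t : List ℕ) (hs : ∀ a ∈ s, 0 < a)
    (ht : ∀ a ∈ t, 0 < a) (hst : s ≠ t) :
    Dense {x : ℕ → Bool | hmap s x ≠ hmap t x} := by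
  have hs0 : 0 ∉ s := fun h => (hs 0 h).false
  have ht0 : 0 ∉ t := fun h => (ht 0 h).false
  have hex : ∃ m, s.getD m 0 ≠ t.getD m 0 := by
    by_contra! h
    exact hst (List.ext_getD_of_not_mem hs0 ht0 h)
  classical
  have hagree : ∀ l < Nat.find hex, s.getD l 0 = t.getD l 0 := fun l hl =>
    not_not.1 (Nat.find_min hex hl)
  simp only [hmap_eq_comp]
  refine dense_setOf_comp_ne (le_hmapIndex s) (le_hmapIndex t) fun N => ?_
  rcases (Nat.find_spec hex).lt_or_gt with hlt | hlt
  · exact exists_hmapIndex_ne hs0 ht0 hagree hlt N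
  · obtain ⟨k, hk, hne⟩ := exists_hmapIndex_ne ht0 hs0 (fun l hl => (hagree l hl).symm) hlt N
    exact ⟨k, hk, hne.symm⟩
end

section
/- Let F = Π_{i∈ω} A_i ⊆ ω^ω with A_i finite, and define relations on ⋃_p Π_{i<p} A_i by: s R_n t iff |s| = |t|, s ≤_lex t, and (N_s × N_t) ∩ Gr(f_n) ≠ ∅; s R t iff s R_n t for some n; T the symmetrization of R; and E the equivalence relation generated by T, where (f_n) are the functions of the departure situation built from the prime coding J. Then for any s, t of the same length, there is at most one repetition-free T-chain u with u(0) = s and u(|u|−1) = t. -/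
/-!
Join `s ≠ t` by an edge when `s T t`; repetition-free `T`-chains are then paths, so it suffices
that this graph is a forest. A single `R`-step changes a coordinate `i` only from `1` to
`J(s↾(i+1))`, and only at positions `J(c↾j ⌢ d↾(j+1))`; these increase with `j`, and by
injectivity of `J` one such position determines all smaller ones, so the step out of `s` that
changes a given coordinate is unique. Take a cycle of sequences of length `l + 1`. If its last
coordinate never changes, truncating gives a cycle of length `l`. Otherwise some step raises the
last coordinate of `a` from `1` to `J(a)`; the cycle can bring it back to `1` only by a step
down from a vertex with last coordinate `J(a)`, which lands on `a` itself. Both steps out of `a`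
change the last coordinate, hence coincide, and the cycle has length `2`.
-/

open scoped Classical

/-- The recursively defined sets `A_i = {1} ∪ {J(u⌢1) : u ∈ Π_{p<i} A_p}`. -/
noncomputable def Aset : ℕ → Set ℕ := fun i =>
  Nat.strongRecOn i (fun i ih =>
    {1} ∪ {n | ∃ u : Fin i → ℕ, (∀ p : Fin i, u p ∈ ih p.val p.isLt) ∧
      n = Jcode (List.ofFn u ++ [1])})

/-- The clopen domain `D_{f_{s,t}}` of the departure-situation function `f_{s,t}`. -/
noncomputable def Ddep (s t : List ℕ) : Set (ℕ → ℕ) :=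
  {α | (∀ i, α i ∈ Aset i) ∧ ∀ j ≤ s.length,
    α (Jcode (s.take j ++ t.take (j + 1))) = 1 ∧
    ∀ p < t.getD j 0, α (Jcode (s.take j ++ t.take j ++ [p])) ≠ 1}

/-- The departure-situation function `f_{s,t}`: it replaces the coordinates at the
positions `J(s↾j ⌢ t↾(j+1))` by `J(α↾(q+1))` and leaves the others unchanged. -/
noncomputable def fdep (s t : List ℕ) (α : ℕ → ℕ) : ℕ → ℕ := fun q =>
  if ∃ j ≤ s.length, q = Jcode (s.take j ++ t.take (j + 1)) then
    Jcode (List.ofFn fun i : Fin (q + 1) => α i)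
  else α q

/-- The relation `R`: `s R t` iff `|s| = |t|`, `s ≤_lex t` and some basic rectangle
`N_s × N_t` meets the graph of some departure-situation function `f_{c,d}`. -/
noncomputable def Rrel (s t : List ℕ) : Prop :=
  s.length = t.length ∧ (List.Lex (· < ·) s t ∨ s = t) ∧
  ∃ c d : List ℕ, d.length = c.length + 1 ∧
    ∃ α : ℕ → ℕ, α ∈ Ddep c d ∧ (∀ i < s.length, α i = s.getD i 0) ∧
      ∀ i < t.length, fdep c d α i = t.getD i 0

/-- The symmetrization `T` of `R`. -/
noncomputable def Trel (s t : List ℕ) : Prop := Rrel s t ∨ Rrel t s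

section Jcode

open Finset

local notation "q" => Nat.nth Nat.Prime

theorem nth_prime_pow_pos (i e : ℕ) : 0 < q i ^ e := pow_pos (Nat.prime_nth_prime i).pos e

theorem jcode_factorization {L : List ℕ} (hL : L ≠ []) (m : ℕ) :
    (Jcode L).factorization (q m) = if m < L.length then L.getD m 0 + 1 else 0 := by
  rw [Jcode, if_neg hL,
    Nat.factorization_prod fun i _ => (nth_prime_pow_pos i _).ne']
  simp only [Finsupp.finsetSum_apply, (Nat.prime_nth_prime _).factorization_pow,
    Finsupp.single_apply, (Nat.nth_injective Nat.infinite_setOfPred_prime).eq_iff]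
  rw [sum_ite_eq']
  simp

theorem one_lt_jcode {L : List ℕ} (hL : L ≠ []) : 1 < Jcode L := by
  have h0 := jcode_factorization hL 0
  rw [if_pos (List.length_pos_iff.mpr hL)] at h0
  by_contra! h
  obtain h | h : Jcode L = 0 ∨ Jcode L = 1 := by omega
  all_goals rw [h] at h0; simp at h0

theorem jcode_injective {L L' : List ℕ} (hL : L ≠ []) (hL' : L' ≠ [])
    (h : Jcode L = Jcode L') : L = L' := by
  have hf (m : ℕ) := (jcode_factorization hL m).symm.trans (h ▸ jcode_factorization hL' m)
  have hmem (m : ℕ) : m < L.length ↔ m < L'.length := by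
    have := hf m
    split_ifs at this <;> omega
  have hlen : L.length = L'.length :=
    le_antisymm (not_lt.1 fun h' => ((hmem _).1 h').false)
      (not_lt.1 fun h' => ((hmem _).2 h').false)
  refine List.ext_getElem hlen fun i hi hi' => ?_
  have := hf i
  rw [if_pos hi, if_pos hi', List.getD_eq_getElem _ _ hi, List.getD_eq_getElem _ _ hi'] at this
  omega

theorem jcode_append {A B : List ℕ} (h : A ++ B ≠ []) :
    Jcode (A ++ B) = (∏ x ∈ range A.length, q x ^ (A.getD x 0 + 1)) *
      ∏ x ∈ range B.length, q (A.length + x) ^ (B.getD x 0 + 1) := by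
  rw [Jcode, if_neg h, List.length_append, prod_range_add]
  congr 1
  · refine prod_congr rfl fun x hx => ?_
    rw [List.getD_append _ _ _ _ (mem_range.1 hx)]
  · refine prod_congr rfl fun x _ => ?_
    rw [List.getD_append_right _ _ _ _ (by omega), Nat.add_sub_cancel_left]

theorem jcode_le_jcode_append (L M : List ℕ) : Jcode L ≤ Jcode (L ++ M) := by
  rcases eq_or_ne L [] with rfl | hL
  · simp [Jcode]
  have h := jcode_append (B := []) (by simpa using hL)
  rw [List.append_nil] at h
  rw [h, jcode_append (by simp [hL])]
  simp only [List.length_nil, range_zero, prod_empty, mul_one]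
  exact Nat.le_mul_of_pos_right _ (prod_pos fun i _ => nth_prime_pow_pos _ _)

theorem jcode_append_lt_jcode_append_cons (A : List ℕ) {B : List ℕ} (hB : B ≠ []) (z : ℕ) :
    Jcode (A ++ B) < Jcode (A ++ z :: B) := by
  rw [jcode_append (by simp [hB]), jcode_append (by simp), List.length_cons, prod_range_succ']
  refine Nat.mul_lt_mul_of_pos_left ?_ (prod_pos fun i _ => nth_prime_pow_pos _ _)
  simp only [List.getD_cons_succ, List.getD_cons_zero, add_zero]
  calc ∏ x ∈ range B.length, q (A.length + x) ^ (B.getD x 0 + 1)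
      < ∏ x ∈ range B.length, q (A.length + (x + 1)) ^ (B.getD x 0 + 1) :=
        prod_lt_prod_of_nonempty (fun i _ => nth_prime_pow_pos _ _)
          (fun i _ => Nat.pow_lt_pow_left
            (Nat.nth_strictMono Nat.infinite_setOfPred_prime (by omega)) (by omega))
          (nonempty_range_iff.2 (by simpa using hB))
    _ ≤ _ := Nat.le_mul_of_pos_right _ (nth_prime_pow_pos _ _)

end Jcode

noncomputable def depPos (c d : List ℕ) (j : ℕ) : ℕ := Jcode (c.take j ++ d.take (j + 1))

def depPositions (c d : List ℕ) : Set ℕ := {p | ∃ j ≤ c.length, p = depPos c d j}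

section DepPositions

variable {c d c' d' : List ℕ}

theorem take_append_take_eq_of_le {i j : ℕ} (hij : i ≤ j) (hj : j ≤ c.length) :
    c.take i ++ d.take (i + 1) =
      (c.take j ++ d.take (j + 1)).take i ++
        ((c.take j ++ d.take (j + 1)).drop j).take (i + 1) := by
  rw [List.take_append_of_le_length (by simp; omega), List.drop_left' (by simpa using hj),
    List.take_take, List.take_take, min_eq_left hij, min_eq_left (by omega)]

theorem depPos_strictMonoOn (hd : d.length = c.length + 1) :
    StrictMonoOn (depPos c d) (Set.Iic c.length) := by
  refine strictMonoOn_Iic_of_lt_succ fun j hj => ?_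
  have hdj : j + 1 < d.length := by omega
  calc depPos c d j < Jcode (c.take j ++ c.get ⟨j, hj⟩ :: d.take (j + 1)) :=
        jcode_append_lt_jcode_append_cons _ (List.ne_nil_of_length_pos (by simp; omega)) _
    _ ≤ Jcode ((c.take j ++ c.get ⟨j, hj⟩ :: d.take (j + 1)) ++ [d.get ⟨j + 1, hdj⟩]) :=
        jcode_le_jcode_append _ _
    _ = depPos c d (Order.succ j) := by
      rw [Order.succ_eq_add_one, depPos, List.take_succ_eq_append_getElem hj,
        List.take_succ_eq_append_getElem hdj]
      simp only [List.get_eq_getElem, List.append_assoc, List.cons_append, List.nil_append]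

theorem depPos_eq_depPos (hd : d.length = c.length + 1) (hd' : d'.length = c'.length + 1)
    {j j' : ℕ} (hj : j ≤ c.length) (hj' : j' ≤ c'.length)
    (h : depPos c d j = depPos c' d' j') :
    j = j' ∧ ∀ i ≤ j, depPos c d i = depPos c' d' i := by
  have hL := jcode_injective (List.ne_nil_of_length_pos (by simp; omega))
    (List.ne_nil_of_length_pos (by simp; omega)) h
  have hjj : j = j' := by
    have := congrArg List.length hL
    simp only [List.length_append, List.length_take] at this
    omega
  subst hjj
  refine ⟨rfl, fun i hi => ?_⟩
  rw [depPos, depPos, take_append_take_eq_of_le hi hj, take_append_take_eq_of_le hi hj', hL]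

theorem mem_depPositions_of_le (hd : d.length = c.length + 1) (hd' : d'.length = c'.length + 1)
    {p i : ℕ} (hp : p ∈ depPositions c d) (hp' : p ∈ depPositions c' d') (hip : i ≤ p)
    (hi : i ∈ depPositions c d) : i ∈ depPositions c' d' := by
  obtain ⟨j, hj, rfl⟩ := hp
  obtain ⟨j', hj', hjj'⟩ := hp'
  obtain ⟨k, hk, rfl⟩ := hi
  obtain ⟨rfl, hpre⟩ := depPos_eq_depPos hd hd' hj hj' hjj'
  have hkj : k ≤ j := not_lt.1 fun hjk => (depPos_strictMonoOn hd hj hk hjk).not_ge hip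
  exact ⟨k, hkj.trans hj', hpre k hkj⟩

theorem mem_depPositions_iff_of_le (hd : d.length = c.length + 1)
    (hd' : d'.length = c'.length + 1) {p i : ℕ} (hp : p ∈ depPositions c d)
    (hp' : p ∈ depPositions c' d') (hip : i ≤ p) :
    i ∈ depPositions c d ↔ i ∈ depPositions c' d' :=
  ⟨mem_depPositions_of_le hd hd' hp hp' hip, mem_depPositions_of_le hd' hd hp' hp hip⟩

end DepPositions

theorem fdep_apply (c d : List ℕ) (α : ℕ → ℕ) (p : ℕ) :
    fdep c d α p = if p ∈ depPositions c d then Jcode (List.ofFn fun i : Fin (p + 1) => α i)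
      else α p := by
  -- the two conditions agree; only their `Decidable` instances differ
  unfold fdep
  congr

theorem List.lex_or_eq_of_forall₂ {α : Type*} {r : α → α → Prop} {l₁ l₂ : List α}
    (h : List.Forall₂ (fun a b => a ≠ b → r a b) l₁ l₂) :
    List.Lex r l₁ l₂ ∨ l₁ = l₂ := by
  induction h with
  | nil => exact Or.inr rfl
  | @cons a b _ _ hab _ ih =>
    by_cases heq : a = b
    · subst heq
      exact ih.imp List.Lex.cons (congrArg _)
    · exact Or.inl (List.Lex.rel (hab heq))

theorem List.getD_take_of_lt {α : Type*} {s : List α} {d : α} {k i : ℕ} (h : i < k) :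
    (s.take k).getD i d = s.getD i d := by
  simp [List.getD_eq_getElem?_getD, h]

theorem List.eq_take_append_getD {α : Type*} {s : List α} {d : α} {l : ℕ}
    (hs : s.length = l + 1) : s = s.take l ++ [s.getD l d] := by
  rw [List.getD_eq_getElem _ _ (by omega), ← List.take_succ_eq_append_getElem (by omega),
    List.take_of_length_le hs.le]

theorem List.ofFn_eq_take {α : Type*} {s : List α} {d : α} {f : ℕ → α} {i : ℕ}
    (hi : i < s.length) (hf : ∀ r < s.length, f r = s.getD r d) :
    List.ofFn (fun r : Fin (i + 1) => f r) = s.take (i + 1) := by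
  refine List.ext_getElem (by simp; omega) fun r h₁ _ => ?_
  simp only [List.length_ofFn] at h₁
  rw [List.getElem_ofFn, List.getElem_take, hf r (by omega), List.getD_eq_getElem]

section Rrel

variable {s t : List ℕ}

theorem Rrel.exists_depPositions (h : Rrel s t) :
    ∃ c d : List ℕ, d.length = c.length + 1 ∧ ∀ i < s.length,
      (i ∈ depPositions c d → s.getD i 0 = 1 ∧ t.getD i 0 = Jcode (s.take (i + 1))) ∧
      (i ∉ depPositions c d → t.getD i 0 = s.getD i 0) := by
  obtain ⟨hlen, -, c, d, hd, α, hα, hαs, hαt⟩ := h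
  refine ⟨c, d, hd, fun i hi => ⟨fun hP => ⟨?_, ?_⟩, fun hP => ?_⟩⟩
  · obtain ⟨j, hj, rfl⟩ := hP
    rw [← hαs _ hi]
    exact (hα.2 j hj).1
  · rw [← hαt i (hlen ▸ hi), fdep_apply, if_pos hP, List.ofFn_eq_take hi hαs]
  · rw [← hαt i (hlen ▸ hi), fdep_apply, if_neg hP, hαs i hi]

theorem Rrel.getD_of_ne (h : Rrel s t) {i : ℕ} (hi : i < s.length)
    (hne : s.getD i 0 ≠ t.getD i 0) : s.getD i 0 = 1 ∧ t.getD i 0 = Jcode (s.take (i + 1)) := by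
  obtain ⟨c, d, -, hcd⟩ := h.exists_depPositions
  by_cases hP : i ∈ depPositions c d
  · exact (hcd i hi).1 hP
  · exact absurd ((hcd i hi).2 hP).symm hne

theorem Rrel.take (h : Rrel s t) (k : ℕ) : Rrel (s.take k) (t.take k) := by
  obtain ⟨hlen, -, c, d, hd, α, hα, hαs, hαt⟩ := id h
  refine ⟨by simp [hlen], List.lex_or_eq_of_forall₂ ?_, c, d, hd, α, hα, fun i hi => ?_,
    fun i hi => ?_⟩
  · refine List.forall₂_iff_get.2 ⟨by simp [hlen], fun i h₁ h₂ hne => ?_⟩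
    simp only [List.length_take] at h₁
    simp only [List.get_eq_getElem, ← List.getD_eq_getElem _ 0] at hne ⊢
    rw [List.getD_take_of_lt (by omega), List.getD_take_of_lt (by omega)] at hne ⊢
    obtain ⟨h1, h2⟩ := h.getD_of_ne (by omega) hne
    rw [h1, h2]
    exact one_lt_jcode (List.ne_nil_of_length_pos (by simp; omega))
  · simp only [List.length_take] at hi
    rw [List.getD_take_of_lt (by omega), hαs i (by omega)]
  · simp only [List.length_take] at hi
    rw [List.getD_take_of_lt (by omega), hαt i (by omega)]

theorem Rrel.eq_of_getD_ne {t' : List ℕ} {l : ℕ} (h : Rrel s t) (h' : Rrel s t')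
    (hl : s.length = l + 1) (ht : s.getD l 0 ≠ t.getD l 0) (ht' : s.getD l 0 ≠ t'.getD l 0) :
    t = t' := by
  obtain ⟨c, d, hd, hcd⟩ := h.exists_depPositions
  obtain ⟨c', d', hd', hcd'⟩ := h'.exists_depPositions
  have hP : l ∈ depPositions c d := by_contra fun hP => ht ((hcd l (by omega)).2 hP).symm
  have hP' : l ∈ depPositions c' d' := by_contra fun hP => ht' ((hcd' l (by omega)).2 hP).symm
  refine List.ext_getElem (h.1.symm.trans h'.1) fun i hi _ => ?_
  have his : i < s.length := h.1 ▸ hi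
  have hiff := mem_depPositions_iff_of_le hd hd' hP hP' (i := i) (by omega)
  rw [← List.getD_eq_getElem _ 0, ← List.getD_eq_getElem _ 0]
  by_cases hiP : i ∈ depPositions c d
  · rw [((hcd i his).1 hiP).2, ((hcd' i his).1 (hiff.1 hiP)).2]
  · rw [(hcd i his).2 hiP, (hcd' i his).2 (hiff.not.1 hiP)]

end Rrel

section Trel

variable {s t : List ℕ}

theorem Trel.symm (h : Trel s t) : Trel t s := Or.symm h

theorem Trel.take (h : Trel s t) (k : ℕ) : Trel (s.take k) (t.take k) :=
  h.imp (Rrel.take · k) (Rrel.take · k)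

theorem Trel.length_eq (h : Trel s t) : s.length = t.length :=
  h.elim (·.1) (·.1.symm)

theorem Trel.getD_eq_of_ne_one (h : Trel s t) {i : ℕ} (hi : i < s.length)
    (hs : s.getD i 0 ≠ 1) (ht : t.getD i 0 ≠ 1) : s.getD i 0 = t.getD i 0 := by
  by_contra hne
  rcases h with h | h
  · exact hs (h.getD_of_ne hi hne).1
  · exact ht (h.getD_of_ne (h.1 ▸ hi) (Ne.symm hne)).1

theorem Trel.rrel_of_getD_eq_one (h : Trel s t) {l : ℕ} (hl : s.length = l + 1)
    (hs : s.getD l 0 = 1) (ht : t.getD l 0 ≠ 1) : Rrel s t ∧ t.getD l 0 = Jcode s := by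
  rcases h with h | h
  · have := (h.getD_of_ne (by omega) (hs ▸ Ne.symm ht)).2
    rw [List.take_of_length_le hl.le] at this
    exact ⟨h, this⟩
  · exact absurd (h.getD_of_ne (h.1 ▸ hl ▸ Nat.lt_succ_self l) (hs ▸ ht)).1 ht

end Trel

theorem ZMod.forall_of_add_one {n : ℕ} [NeZero n] {P : ZMod n → Prop} {r₀ : ZMod n}
    (h₀ : P r₀) (h : ∀ r, P r → P (r + 1)) (r : ZMod n) : P r := by
  have key (k : ℕ) : P (r₀ + k) := by
    induction k with
    | zero => simpa using h₀
    | succ k ih => simpa [← add_assoc] using h _ ih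
  simpa using key (r - r₀).val

theorem ZMod.exists_and_not_add_one {n : ℕ} [NeZero n] {P : ZMod n → Prop} (h : ∃ r, P r)
    (h' : ∃ r, ¬ P r) : ∃ r, P r ∧ ¬ P (r + 1) := by
  obtain ⟨r₀, h₀⟩ := h
  by_contra! hall
  obtain ⟨r, hr⟩ := h'
  exact hr (ZMod.forall_of_add_one h₀ hall r)

theorem ZMod.eq_of_natCast_eq_of_lt {n k k' : ℕ} (hk : k < n) (hk' : k' < n)
    (h : (k : ZMod n) = k') : k = k' := by
  simpa [ZMod.val_cast_of_lt hk, ZMod.val_cast_of_lt hk'] using congrArg ZMod.val h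

theorem getD_eq_of_trel_of_ne_one {w : ℕ → List ℕ} {l a b : ℕ}
    (htr : ∀ k, Trel (w k) (w (k + 1))) (hl : ∀ k, (w k).length = l + 1) (hab : a ≤ b)
    (hne : ∀ k, a ≤ k → k ≤ b → (w k).getD l 0 ≠ 1) :
    (w b).getD l 0 = (w a).getD l 0 := by
  induction b, hab using Nat.le_induction with
  | base => rfl
  | succ b hab ih =>
    rw [← ih fun k hk hkb => hne k hk (by omega)]
    exact ((htr b).getD_eq_of_ne_one (by rw [hl]; omega) (hne b hab (by omega))
      (hne _ (by omega) le_rfl)).symm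

/-- Cycles of `T` are indexed by `ZMod n`, so that rotating one is an addition. -/
structure IsTrelCycle {n : ℕ} (v : ZMod n → List ℕ) : Prop where
  injective : Function.Injective v
  trel : ∀ r, Trel (v r) (v (r + 1))

namespace IsTrelCycle

variable {n : ℕ} {v : ZMod n → List ℕ}

theorem shift (hv : IsTrelCycle v) (r₀ : ZMod n) : IsTrelCycle fun r => v (r₀ + r) :=
  ⟨hv.injective.comp (add_right_injective r₀),
    fun r => by simpa [add_assoc] using hv.trel (r₀ + r)⟩

theorem length_eq [NeZero n] (hv : IsTrelCycle v) (r : ZMod n) : (v r).length = (v 0).length :=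
  ZMod.forall_of_add_one (P := fun r => (v r).length = (v 0).length) rfl
    (fun r h => (hv.trel r).length_eq ▸ h) r

theorem take {l : ℕ} (hv : IsTrelCycle v) (hl : ∀ r, (v r).length = l + 1)
    (hx : ∀ r, (v r).getD l 0 = (v 0).getD l 0) : IsTrelCycle fun r => (v r).take l := by
  refine ⟨fun r r' h => hv.injective ?_, fun r => (hv.trel r).take l⟩
  rw [List.eq_take_append_getD (hl r), List.eq_take_append_getD (hl r'), h, hx r, hx r']

theorem getD_one_eq_one {l : ℕ} (hn : 3 ≤ n) (hv : IsTrelCycle v)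
    (hl : ∀ r, (v r).length = l + 1) (h₀ : (v 0).getD l 0 = 1) : (v 1).getD l 0 = 1 := by
  by_contra h₁
  have : NeZero n := ⟨by omega⟩
  obtain ⟨hr₀₁, hx₁⟩ :=
    (zero_add (1 : ZMod n) ▸ hv.trel 0).rrel_of_getD_eq_one (hl 0) h₀ h₁
  have hlast : (v ((n - 1 + 1 : ℕ) : ZMod n)).getD l 0 = 1 := by
    rw [Nat.sub_add_cancel (by omega), ZMod.natCast_self, h₀]
  have hback : ∃ k, (v ((k + 1 : ℕ) : ZMod n)).getD l 0 = 1 := ⟨n - 1, hlast⟩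
  set b := Nat.find hback
  have hb : (v ((b + 1 : ℕ) : ZMod n)).getD l 0 = 1 := Nat.find_spec hback
  have hbn : b < n := by have := Nat.find_le (n := n - 1) (h := hback) hlast; omega
  have hb₁ : 1 ≤ b := Nat.one_le_iff_ne_zero.2 fun h => h₁ (by simpa [h] using hb)
  have hxb : (v b).getD l 0 = (v 1).getD l 0 := by
    simpa using getD_eq_of_trel_of_ne_one (w := fun k => v k) (fun k => by simpa using hv.trel k)
      (fun k => hl k) hb₁ fun k hk _ => by
        obtain ⟨j, rfl⟩ : ∃ j, k = j + 1 := ⟨k - 1, by omega⟩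
        exact Nat.find_min hback (show j < b by omega)
  -- the first return to `1` is a step down from `v b`, whose last coordinate is still `J(v 0)`
  obtain ⟨hrb, hxb'⟩ :=
    (Nat.cast_succ (R := ZMod n) b ▸ hv.trel b).symm.rrel_of_getD_eq_one (hl _) hb (hxb ▸ h₁)
  have hne (r : ZMod n) : v r ≠ [] := List.ne_nil_of_length_pos (by rw [hl]; omega)
  have hret : v 0 = v ((b + 1 : ℕ) : ZMod n) :=
    jcode_injective (hne _) (hne _) (by rw [← hx₁, ← hxb', hxb])
  rw [← hret] at hrb
  have h1b : v 1 = v b :=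
    hr₀₁.eq_of_getD_ne hrb (hl 0) (h₀ ▸ Ne.symm h₁) (h₀ ▸ hxb ▸ Ne.symm h₁)
  have hb1 : b = 1 :=
    ZMod.eq_of_natCast_eq_of_lt hbn (by omega) (by simpa using (hv.injective h1b).symm)
  have h02 := hv.injective hret
  rw [hb1] at h02
  have := ZMod.eq_of_natCast_eq_of_lt (n := n) (k := 0) (k' := 2) (by omega) (by omega)
    (by simpa using h02)
  omega

end IsTrelCycle

theorem not_isTrelCycle_of_length {n : ℕ} (hn : 3 ≤ n) :
    ∀ (l : ℕ) {v : ZMod n → List ℕ}, IsTrelCycle v → (∀ r, (v r).length = l) → False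
  | 0, v, hv, hl => by
    have h01 : v 0 = v 1 := by
      rw [List.eq_nil_of_length_eq_zero (hl 0), List.eq_nil_of_length_eq_zero (hl 1)]
    have := ZMod.eq_of_natCast_eq_of_lt (n := n) (k := 0) (k' := 1) (by omega) (by omega)
      (by simpa using hv.injective h01)
    omega
  | l + 1, v, hv, hl => by
    have : NeZero n := ⟨by omega⟩
    by_cases hconst : ∀ r, (v r).getD l 0 = (v (r + 1)).getD l 0
    · have hx : ∀ r, (v r).getD l 0 = (v 0).getD l 0 :=
        ZMod.forall_of_add_one (P := fun r => (v r).getD l 0 = (v 0).getD l 0) rfl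
          fun r h => hconst r ▸ h
      exact not_isTrelCycle_of_length hn l (hv.take hl hx) fun r => by simp [hl r]
    push Not at hconst
    obtain ⟨r, hr⟩ := hconst
    obtain ⟨r₀, h₀, h₁⟩ :
        ∃ r₀, (v r₀).getD l 0 = 1 ∧ (v (r₀ + 1)).getD l 0 ≠ 1 := by
      by_cases hr1 : (v r).getD l 0 = 1
      · exact ⟨r, hr1, fun h => hr (hr1.trans h.symm)⟩
      refine ZMod.exists_and_not_add_one ⟨r + 1, ?_⟩ ⟨r, hr1⟩
      by_contra hr2
      exact hr ((hv.trel r).getD_eq_of_ne_one (by rw [hl]; omega) hr1 hr2)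
    exact h₁ <| by
      simpa using (hv.shift r₀).getD_one_eq_one hn (fun r => hl _) (by simpa using h₀)

theorem not_isTrelCycle {n : ℕ} (hn : 3 ≤ n) (v : ZMod n → List ℕ) : ¬ IsTrelCycle v := by
  have : NeZero n := ⟨by omega⟩
  exact fun hv => not_isTrelCycle_of_length hn _ hv hv.length_eq

def trelGraph : SimpleGraph (List ℕ) := SimpleGraph.fromRel Rrel

theorem trelGraph_adj {s t : List ℕ} : trelGraph.Adj s t ↔ s ≠ t ∧ Trel s t :=
  SimpleGraph.fromRel_adj _ _ _

theorem SimpleGraph.Walk.IsCycle.isTrelCycle {a : List ℕ} {c : trelGraph.Walk a a}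
    (hc : c.IsCycle) : IsTrelCycle fun r : ZMod c.length => c.getVert r.val := by
  have hn := hc.three_le_length
  have : NeZero c.length := ⟨by omega⟩
  refine ⟨fun r r' h => ZMod.val_injective _ (hc.getVert_injOn' ?_ ?_ h), fun r => ?_⟩
  · have := r.val_lt; simp only [Set.mem_ofPred_eq]; omega
  · have := r'.val_lt; simp only [Set.mem_ofPred_eq]; omega
  have hsucc : c.getVert (r + 1).val = c.getVert (r.val + 1) := by
    rw [ZMod.val_add, ZMod.val_one'' (by omega)]
    obtain h | h := (show r.val + 1 ≤ c.length from r.val_lt).lt_or_eq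
    · rw [Nat.mod_eq_of_lt h]
    · rw [h, Nat.mod_self, SimpleGraph.Walk.getVert_zero, SimpleGraph.Walk.getVert_length]
  rw [hsucc]
  exact (trelGraph_adj.1 (c.adj_getVert_succ r.val_lt)).2

theorem trelGraph_isAcyclic : trelGraph.IsAcyclic :=
  fun _ _ hc => not_isTrelCycle hc.three_le_length _ hc.isTrelCycle

theorem isChain_trelGraph_adj {l : List (List ℕ)} (hnd : l.Nodup) (hc : l.IsChain Trel) :
    l.IsChain trelGraph.Adj :=
  List.isChain_iff_getElem.2 fun i hi => trelGraph_adj.2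
    ⟨fun h => by have := hnd.getElem_inj_iff.1 h; omega, List.isChain_iff_getElem.1 hc i hi⟩

theorem SimpleGraph.exists_path_support_eq {V : Type*} {G : SimpleGraph V} {l : List V} {a b : V}
    (hnd : l.Nodup) (hc : l.IsChain G.Adj) (ha : l.head? = some a) (hb : l.getLast? = some b) :
    ∃ p : G.Path a b, (p : G.Walk a b).support = l := by
  have hne : l ≠ [] := by rintro rfl; simp at ha
  have ha' : l.head hne = a := by simpa [List.head?_eq_some_head hne] using ha
  have hb' : l.getLast hne = b := by simpa [List.getLast?_eq_some_getLast hne] using hb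
  let p := (Walk.ofSupport l hne hc).copy ha' hb'
  have hp : p.support = l := by simp [p]
  exact ⟨⟨p, .mk' (hp ▸ hnd)⟩, hp⟩

theorem unique_repetition_free_chain_general (s t : List ℕ)
    (u v : List (List ℕ))
    (hund : u.Nodup) (hvnd : v.Nodup)
    (huc : u.Chain' Trel) (hvc : v.Chain' Trel)
    (huh : u.head? = some s) (hvh : v.head? = some s)
    (hul : u.getLast? = some t) (hvl : v.getLast? = some t) :
    u = v := by
  obtain ⟨p, rfl⟩ :=
    SimpleGraph.exists_path_support_eq hund (isChain_trelGraph_adj hund huc) huh hul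
  obtain ⟨p', rfl⟩ :=
    SimpleGraph.exists_path_support_eq hvnd (isChain_trelGraph_adj hvnd hvc) hvh hvl
  rw [(trelGraph_isAcyclic.subsingleton_path s t).elim p p']

/-- Condition (e)(ii) of a departure situation (Lemma 6): between any two finite
sequences `s, t ∈ ⋃_p Π_{i<p} A_i` of the same length there is at most one
repetition-free `T`-chain from `s` to `t`. -/
theorem unique_repetition_free_chain (s t : List ℕ) (hlen : s.length = t.length)
    (hs : ∀ i < s.length, s.getD i 0 ∈ Aset i)
    (ht : ∀ i < t.length, t.getD i 0 ∈ Aset i)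
    (u v : List (List ℕ))
    (hu : ∀ w ∈ u, ∀ i < w.length, w.getD i 0 ∈ Aset i)
    (hv : ∀ w ∈ v, ∀ i < w.length, w.getD i 0 ∈ Aset i)
    (hund : u.Nodup) (hvnd : v.Nodup)
    (huc : u.Chain' Trel) (hvc : v.Chain' Trel)
    (huh : u.head? = some s) (hvh : v.head? = some s)
    (hul : u.getLast? = some t) (hvl : v.getLast? = some t) :
    u = v :=
  unique_repetition_free_chain_general s t u v hund hvnd huc hvc huh hvh hul hvl
end
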